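/- Let a' ∈ ℝ³ be spacelike and n ∈ ℝ³ be timelike with ⟨n,n⟩_L = −1 and ⟨n, a'⟩_L = 0. If N = m·(Re(v') ×_E a') is the unit timelike Euclidean normal (⟨N,N⟩_L = −1) to the plane spanned by Re(v') and a', and n₁ = (N₁, N₂, −N₃), then (n₁ ×_L a') ×_E a' = ⟨a', a'⟩_L · N. -/

import Mathlib

/-- Lorentzian inner product on ℝ³. -/
def LR (v w : Fin 3 → ℝ) : ℝ := v 0 * w 0 + v 1 * w 1 - v 2 * w 2

/-- Lorentzian cross product on ℝ³. -/
def lcross (v w : Fin 3 → ℝ) : Fin 3 → ℝ :=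
  ![v 1 * w 2 - v 2 * w 1, v 2 * w 0 - v 0 * w 2, -(v 0 * w 1 - v 1 * w 0)]

/-- Euclidean cross product on ℝ³. -/
def ecross (v w : Fin 3 → ℝ) : Fin 3 → ℝ :=
  ![v 1 * w 2 - v 2 * w 1, v 2 * w 0 - v 0 * w 2, v 0 * w 1 - v 1 * w 0]

def timeReflect (v : Fin 3 → ℝ) : Fin 3 → ℝ := ![v 0, v 1, -v 2]

theorem ecross_eq_crossProduct (v w : Fin 3 → ℝ) : ecross v w = crossProduct v w := rfl

theorem ecross_lcross_timeReflect (N a : Fin 3 → ℝ) :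
    ecross (lcross (timeReflect N) a) a = LR a a • N - (N ⬝ᵥ a) • timeReflect a := by
  ext i
  fin_cases i <;> simp [ecross, lcross, LR, timeReflect, dotProduct, Fin.sum_univ_three] <;> ring

theorem ecross_lcross_timeReflect_of_dotProduct_eq_zero {N a : Fin 3 → ℝ} (h : N ⬝ᵥ a = 0) :
    ecross (lcross (timeReflect N) a) a = LR a a • N := by
  rw [ecross_lcross_timeReflect, h, zero_smul, sub_zero]

theorem stmt_4_general (a' Rev' N n₁ : Fin 3 → ℝ) (m : ℝ)
    (hN : N = m • ecross Rev' a')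
    (hn₁ : n₁ = ![N 0, N 1, -(N 2)]) :
    ecross (lcross n₁ a') a' = LR a' a' • N := by
  have horth : N ⬝ᵥ a' = 0 := by
    rw [hN, smul_dotProduct, ecross_eq_crossProduct, dotProduct_comm, dot_cross_self, smul_zero]
  exact hn₁ ▸ ecross_lcross_timeReflect_of_dotProduct_eq_zero horth

/-- If N = m·(Re(v') ×_E a') is the unit timelike Euclidean normal to the plane of
Re(v') and a', and n₁ = (N₁, N₂, −N₃), then (n₁ ×_L a') ×_E a' = ⟨a',a'⟩_L · N. -/
theorem stmt_4 (a' n Rev' N n₁ : Fin 3 → ℝ) (m : ℝ)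
    (hspace : 0 < LR a' a')
    (hn : LR n n = -1) (hna : LR n a' = 0)
    (hN : N = m • ecross Rev' a')
    (hNunit : LR N N = -1)
    (hn₁ : n₁ = ![N 0, N 1, -(N 2)]) :
    ecross (lcross n₁ a') a' = LR a' a' • N :=
  stmt_4_general a' Rev' N n₁ m hN hn₁
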